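/- (Iterated scale-step bound at powers of δ^{-1}) For every n ≥ 2 there is a constant C_n depending only on n such that the following holds. Let 0 < δ ≤ 1/2 and suppose l_{j,a} are lines in ℝ^n, for j = 1, ..., n and a = 1, ..., N_j, each making an angle of at most δ with the x_j-axis, and let T_{j,a} be the characteristic function of the 1-neighborhood of l_{j,a}. Then for every integer M ≥ 0 and every axis-parallel cube Q of side length δ^{-M}, ∫_{Q} ∏_{j=1}^n ( Σ_{a=1}^{N_j} T_{j,a} )^{1/(n-1)} ≤ C_n^M ∏_{j=1}^n N_j^{1/(n-1)}. -/

import Mathlib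

open MeasureTheory Finset
open scoped ENNReal

noncomputable section

/-- The line in `ℝⁿ` through `p` with direction `v`. -/
def line {n : ℕ} (p v : EuclideanSpace ℝ (Fin n)) : Set (EuclideanSpace ℝ (Fin n)) :=
  {x | ∃ t : ℝ, x = p + t • v}

/-- `ℝ≥0∞`-valued characteristic function of the `W`-neighborhood of the set `A`:
the indicator of `{x : dist(x, A) ≤ W}`. -/
def tubeFn {n : ℕ} (A : Set (EuclideanSpace ℝ (Fin n))) (W : ℝ)
    (x : EuclideanSpace ℝ (Fin n)) : ℝ≥0∞ :=
  Set.indicator {y | Metric.infDist y A ≤ W} 1 x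

/-- Axis-parallel cube with corner `c` and side length `S`. -/
def cube {n : ℕ} (c : EuclideanSpace ℝ (Fin n)) (S : ℝ) : Set (EuclideanSpace ℝ (Fin n)) :=
  {x | ∀ i, x i ∈ Set.Icc (c i) (c i + S)}

/-- The projection `ℝⁿ → ℝ^{n-1}` forgetting the `j`-th coordinate. -/
def proj {n : ℕ} (j : Fin n) (x : EuclideanSpace ℝ (Fin n)) :
    EuclideanSpace ℝ (Fin (n - 1)) :=
  WithLp.toLp 2 (fun i : Fin (n - 1) => if (i : ℕ) < (j : ℕ) then x ⟨i, by omega⟩ else x ⟨i + 1, by omega⟩)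

/-- The graph of `g : ℝ → ℝ^{n-1}` over the `x_j`-axis. -/
def lipGraph {n : ℕ} (j : Fin n) (g : ℝ → EuclideanSpace ℝ (Fin (n - 1))) :
    Set (EuclideanSpace ℝ (Fin n)) :=
  {x | proj j x = g (x j)}

/-!
At a single scale the bound is the Loomis–Whitney inequality: inside a cube of side `S`, the
`W`-neighbourhood of a line at angle at most `δ` to the `x_j`-axis lies in a slab of width
`O(W + δS)` in the coordinates other than `x_j`, and Loomis–Whitney applied to the sums of the
slab indicators gives `O(W + δS)^n ∏_j N_j^{1/(n-1)}`.

To pass from side `a = δ^{-M}` to side `δ^{-M-1}`, cut the cube into `O(δ⁻¹)^n` cells of side `a`.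
By induction, a cell `Q` contributes at most `C^M ∏_j N_j(Q)^{1/(n-1)}`, where `N_j(Q)` counts
the tubes meeting `Q`. Tubes thickened to width `1 + √n a` cover every cell their thin versions
meet, so `a^n ∑_Q ∏_j N_j(Q)^{1/(n-1)}` is at most the single-scale bound for the thick tubes over
a cube of side `2δ^{-M-1}`, which is `O(a)^n ∏_j N_j^{1/(n-1)}`.
-/

open Function InnerProductGeometry

section LoomisWhitney

variable {ι : Type*} [DecidableEq ι] {A : ι → Type*} [∀ i, MeasurableSpace (A i)]
  {μ : ∀ i, Measure (A i)}

theorem lmarginal_finsetSum {α : Type*} (s : Finset α) (t : Finset ι)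
    {f : α → (∀ i, A i) → ℝ≥0∞} (hf : ∀ a, Measurable (f a)) :
    ∫⋯∫⁻_t, (fun x => ∑ a ∈ s, f a x) ∂μ = ∑ a ∈ s, ∫⋯∫⁻_t, f a ∂μ := by
  ext x
  simp only [lmarginal, Finset.sum_apply]
  exact lintegral_finsetSum _ fun a _ => (hf a).comp measurable_updateFinset

variable [∀ i, SigmaFinite (μ i)]

theorem lmarginal_prod_eq_prod_lintegral {h : ∀ i, A i → ℝ≥0∞} (hh : ∀ i, Measurable (h i))
    (s : Finset ι) (x : ∀ i, A i) :
    (∫⋯∫⁻_s, (fun y => ∏ i ∈ s, h i (y i)) ∂μ) x = ∏ i ∈ s, ∫⁻ t, h i t ∂μ i := by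
  induction s using Finset.induction generalizing x with
  | empty => simp
  | insert i s hi ih =>
    have hfactor : ∀ z, (∫⋯∫⁻_s, (fun y => ∏ i' ∈ insert i s, h i' (y i')) ∂μ) z
        = h i (z i) * (∫⋯∫⁻_s, (fun y => ∏ i' ∈ s, h i' (y i')) ∂μ) z := by
      intro z
      simp only [lmarginal, prod_insert hi]
      rw [← lintegral_const_mul _ (by fun_prop)]
      simp [updateFinset, hi]
    rw [lmarginal_insert _ (by fun_prop) hi]
    simp_rw [hfactor, update_self, ih]
    rw [lintegral_mul_const _ (hh i), prod_insert hi]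

/-- The inductive form of the Loomis–Whitney inequality: integrating out the coordinates in `s`
one at a time, Hölder's inequality in each new coordinate `i` applies to the `g j`, `j ≠ i`,
while `g i` does not depend on it. -/
theorem lmarginal_prod_rpow_le [Fintype ι] {q : ℝ} (hq0 : 0 ≤ q)
    (hq : ((Fintype.card ι : ℝ) - 1) * q = 1) {g : ι → (∀ i, A i) → ℝ≥0∞}
    (hg : ∀ j, Measurable (g j)) (hgj : ∀ j x t, g j (update x j t) = g j x) (s : Finset ι) :
    ∫⋯∫⁻_s, (fun x => ∏ j, g j x ^ q) ∂μ ≤ fun x => ∏ j, (∫⋯∫⁻_(s.erase j), g j ∂μ) x ^ q := by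
  induction s using Finset.induction with
  | empty => intro x; simp
  | insert i s hi ih =>
    intro x
    set G : ι → A i → ℝ≥0∞ := fun j t => (∫⋯∫⁻_(s.erase j), g j ∂μ) (update x i t)
    have hG : ∀ j, Measurable (G j) := fun j => ((hg j).lmarginal μ).comp (measurable_update x)
    have hGi : ∀ t, G i t = (∫⋯∫⁻_s, g i ∂μ) x := fun t => by
      simp only [G, erase_eq_of_notMem hi, lmarginal_update_of_notMem (hg i) hi]
      rw [show g i ∘ (update · i t) = g i from funext fun y => hgj i y t]
    have hexp : ∑ _j ∈ univ.erase i, q = 1 := by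
      rw [sum_const, card_erase_of_mem (mem_univ i), card_univ, nsmul_eq_mul,
        Nat.cast_pred (Fintype.card_pos_iff.mpr ⟨i⟩)]
      exact hq
    rw [lmarginal_insert _ (by fun_prop) hi]
    calc ∫⁻ t, (∫⋯∫⁻_s, (fun x => ∏ j, g j x ^ q) ∂μ) (update x i t) ∂μ i
        ≤ ∫⁻ t, ∏ j, G j t ^ q ∂μ i := lintegral_mono fun t => ih _
      _ = (∫⋯∫⁻_s, g i ∂μ) x ^ q * ∫⁻ t, ∏ j ∈ univ.erase i, G j t ^ q ∂μ i := by
        simp_rw [← mul_prod_erase univ _ (mem_univ i), hGi]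
        exact lintegral_const_mul _ (by fun_prop)
      _ ≤ (∫⋯∫⁻_s, g i ∂μ) x ^ q * ∏ j ∈ univ.erase i, (∫⁻ t, G j t ∂μ i) ^ q := by
        gcongr
        exact ENNReal.lintegral_prod_norm_pow_le _ (fun j _ => (hG j).aemeasurable) hexp
          fun _ _ => hq0
      _ = ∏ j, (∫⋯∫⁻_((insert i s).erase j), g j ∂μ) x ^ q := by
        rw [← mul_prod_erase univ _ (mem_univ i), erase_insert hi]
        congr 1
        refine prod_congr rfl fun j hj => ?_
        have hij : i ≠ j := (ne_of_mem_erase hj).symm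
        rw [erase_insert_of_ne hij, lmarginal_insert _ (hg j) (by simp [hi])]

/-- The Loomis–Whitney inequality. -/
theorem lintegral_prod_rpow_le_prod_lmarginal [Fintype ι] {q : ℝ} (hq0 : 0 ≤ q)
    (hq : ((Fintype.card ι : ℝ) - 1) * q = 1) {g : ι → (∀ i, A i) → ℝ≥0∞}
    (hg : ∀ j, Measurable (g j)) (hgj : ∀ j x t, g j (update x j t) = g j x) (x₀ : ∀ i, A i) :
    ∫⁻ x, ∏ j, g j x ^ q ∂Measure.pi μ ≤ ∏ j, (∫⋯∫⁻_(univ.erase j), g j ∂μ) x₀ ^ q := by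
  simpa using lmarginal_prod_rpow_le (μ := μ) hq0 hq hg hgj univ x₀

end LoomisWhitney

lemma lmarginal_sum_prod_indicator_Icc {κ α : Type*} [DecidableEq κ] (s : Finset α)
    (t : Finset κ) (z : α → κ → ℝ) (L : ℝ) (x : κ → ℝ) :
    (∫⋯∫⁻_t, (fun y => ∑ a ∈ s, ∏ i ∈ t, (Set.Icc (z a i - L) (z a i + L)).indicator 1 (y i))
      ∂fun _ => volume) x = #s * ENNReal.ofReal (2 * L) ^ #t := by
  have hm : ∀ a i, Measurable ((Set.Icc (z a i - L) (z a i + L)).indicator (1 : ℝ → ℝ≥0∞)) :=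
    fun _ _ => measurable_const.indicator measurableSet_Icc
  rw [lmarginal_finsetSum
      (f := fun a y => ∏ i ∈ t, (Set.Icc (z a i - L) (z a i + L)).indicator 1 (y i))
      _ _ fun a => measurable_prod _ fun i _ => (hm a i).comp (measurable_pi_apply i),
    Finset.sum_apply]
  simp_rw [lmarginal_prod_eq_prod_lintegral (hm _), lintegral_indicator_one measurableSet_Icc,
    Real.volume_Icc]
  have h2L : ∀ y : ℝ, y + L - (y - L) = 2 * L := fun y => by ring
  simp [h2L]

section Cubes

variable {n : ℕ}

lemma setOf_forall_apply_mem_eq_preimage (t : Fin n → Set ℝ) :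
    {x : EuclideanSpace ℝ (Fin n) | ∀ i, x i ∈ t i}
      = (MeasurableEquiv.toLp 2 (Fin n → ℝ)).symm ⁻¹' Set.univ.pi t := by
  ext x
  simp only [Set.mem_ofPred_eq, Set.mem_preimage, Set.mem_univ_pi]
  rfl

lemma measurableSet_setOf_forall_apply_mem {t : Fin n → Set ℝ} (ht : ∀ i, MeasurableSet (t i)) :
    MeasurableSet {x : EuclideanSpace ℝ (Fin n) | ∀ i, x i ∈ t i} := by
  rw [setOf_forall_apply_mem_eq_preimage]
  exact (MeasurableSet.univ_pi ht).preimage (MeasurableEquiv.measurable _)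

lemma volume_setOf_forall_apply_mem {t : Fin n → Set ℝ} (ht : ∀ i, MeasurableSet (t i)) :
    volume {x : EuclideanSpace ℝ (Fin n) | ∀ i, x i ∈ t i} = ∏ i, volume (t i) := by
  rw [setOf_forall_apply_mem_eq_preimage,
    (EuclideanSpace.volume_preserving_symm_measurableEquiv_toLp (Fin n)).measure_preimage
      (MeasurableSet.univ_pi ht).nullMeasurableSet, volume_pi_pi]

lemma measurableSet_cube (c : EuclideanSpace ℝ (Fin n)) (S : ℝ) : MeasurableSet (cube c S) :=
  measurableSet_setOf_forall_apply_mem fun _ => measurableSet_Icc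

lemma volume_cube (c : EuclideanSpace ℝ (Fin n)) (S : ℝ) :
    volume (cube c S) = ENNReal.ofReal S ^ n := by
  rw [cube, volume_setOf_forall_apply_mem fun _ => measurableSet_Icc]
  simp

lemma dist_le_of_mem_cube {c x y : EuclideanSpace ℝ (Fin n)} {S : ℝ} (hS : 0 ≤ S)
    (hx : x ∈ cube c S) (hy : y ∈ cube c S) : dist x y ≤ √n * S := by
  have hcoord : ∀ i, dist (x i) (y i) ^ 2 ≤ S ^ 2 := fun i => by
    obtain ⟨hx₁, hx₂⟩ := hx i
    obtain ⟨hy₁, hy₂⟩ := hy i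
    rw [Real.dist_eq, sq_abs]
    nlinarith
  calc dist x y = √(∑ i, dist (x i) (y i) ^ 2) := EuclideanSpace.dist_eq x y
    _ ≤ √(∑ _i : Fin n, S ^ 2) := Real.sqrt_le_sqrt (sum_le_sum fun i _ => hcoord i)
    _ = √n * S := by simp [Real.sqrt_mul, Real.sqrt_sq hS]

/-- Half-open cubes, unlike the closed `cube`s, tile space. -/
def cubeIco (c : EuclideanSpace ℝ (Fin n)) (S : ℝ) : Set (EuclideanSpace ℝ (Fin n)) :=
  {x | ∀ i, x i ∈ Set.Ico (c i) (c i + S)}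

lemma measurableSet_cubeIco (c : EuclideanSpace ℝ (Fin n)) (S : ℝ) :
    MeasurableSet (cubeIco c S) :=
  measurableSet_setOf_forall_apply_mem fun _ => measurableSet_Ico

lemma volume_cubeIco (c : EuclideanSpace ℝ (Fin n)) (S : ℝ) :
    volume (cubeIco c S) = ENNReal.ofReal S ^ n := by
  rw [cubeIco, volume_setOf_forall_apply_mem fun _ => measurableSet_Ico]
  simp

lemma cubeIco_subset_cube (c : EuclideanSpace ℝ (Fin n)) (S : ℝ) : cubeIco c S ⊆ cube c S :=
  fun _ hx i => Set.Ico_subset_Icc_self (hx i)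

def gridCorner {K : ℕ} (c : EuclideanSpace ℝ (Fin n)) (a : ℝ) (k : Fin n → Fin K) :
    EuclideanSpace ℝ (Fin n) :=
  WithLp.toLp 2 fun i => c i + (k i : ℕ) * a

variable {K : ℕ} {c : EuclideanSpace ℝ (Fin n)} {a : ℝ}

lemma mem_cubeIco_gridCorner_iff (ha : 0 < a) {k : Fin n → Fin K} {x : EuclideanSpace ℝ (Fin n)} :
    x ∈ cubeIco (gridCorner c a k) a ↔ ∀ i, c i ≤ x i ∧ (k i : ℕ) = ⌊(x i - c i) / a⌋₊ := by
  refine forall_congr' fun i => ?_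
  simp only [gridCorner, Set.mem_Ico]
  constructor
  · rintro ⟨h₁, h₂⟩
    have hk : 0 ≤ ((k i : ℕ) : ℝ) * a := by positivity
    refine ⟨by linarith, ((Nat.floor_eq_iff (by rw [le_div_iff₀ ha]; linarith)).2 ⟨?_, ?_⟩).symm⟩
    · rw [le_div_iff₀ ha]; linarith
    · rw [div_lt_iff₀ ha]; linarith
  · rintro ⟨h₀, hk⟩
    have hpos : 0 ≤ (x i - c i) / a := div_nonneg (by linarith) ha.le
    have h₁ := Nat.floor_le hpos
    have h₂ := Nat.lt_floor_add_one ((x i - c i) / a)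
    rw [← hk, le_div_iff₀ ha] at h₁
    rw [← hk, div_lt_iff₀ ha] at h₂
    constructor <;> linarith

lemma pairwise_disjoint_cubeIco_gridCorner (ha : 0 < a) :
    Pairwise (Disjoint on fun k : Fin n → Fin K => cubeIco (gridCorner c a k) a) := by
  intro k k' hkk'
  refine Set.disjoint_left.2 fun x hx hx' => hkk' (funext fun i => Fin.ext ?_)
  rw [((mem_cubeIco_gridCorner_iff ha).1 hx i).2, ((mem_cubeIco_gridCorner_iff ha).1 hx' i).2]

lemma cube_subset_iUnion_cubeIco_gridCorner (ha : 0 < a) {S : ℝ} (hS : S < K * a) :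
    cube c S ⊆ ⋃ k : Fin n → Fin K, cubeIco (gridCorner c a k) a := by
  intro x hx
  have hfloor : ∀ i, ⌊(x i - c i) / a⌋₊ < K := fun i => by
    obtain ⟨h₁, h₂⟩ := hx i
    rw [Nat.floor_lt (div_nonneg (by linarith) ha.le), div_lt_iff₀ ha]
    linarith
  exact Set.mem_iUnion.2 ⟨fun i => ⟨_, hfloor i⟩,
    (mem_cubeIco_gridCorner_iff ha).2 fun i => ⟨(hx i).1, rfl⟩⟩

lemma iUnion_cubeIco_gridCorner_subset_cube (ha : 0 ≤ a) {S : ℝ} (hS : K * a ≤ S) :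
    ⋃ k : Fin n → Fin K, cubeIco (gridCorner c a k) a ⊆ cube c S := by
  refine Set.iUnion_subset fun k x hx i => ?_
  obtain ⟨h₁, h₂⟩ := hx i
  have hk : ((k i : ℕ) : ℝ) + 1 ≤ K := by exact_mod_cast (k i).2
  simp only [gridCorner] at h₁ h₂
  constructor <;> nlinarith

lemma setLIntegral_iUnion_cubeIco_gridCorner (ha : 0 < a) (f : EuclideanSpace ℝ (Fin n) → ℝ≥0∞) :
    ∫⁻ x in ⋃ k : Fin n → Fin K, cubeIco (gridCorner c a k) a, f x
      = ∑ k : Fin n → Fin K, ∫⁻ x in cubeIco (gridCorner c a k) a, f x := by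
  rw [lintegral_iUnion (fun k => measurableSet_cubeIco _ _)
    (pairwise_disjoint_cubeIco_gridCorner ha), tsum_fintype]

end Cubes

section Tubes

variable {n : ℕ}

lemma tubeFn_eq_one_of_infDist_le {L : Set (EuclideanSpace ℝ (Fin n))} {W : ℝ}
    {x : EuclideanSpace ℝ (Fin n)} (h : Metric.infDist x L ≤ W) : tubeFn L W x = 1 :=
  Set.indicator_of_mem (s := {y | Metric.infDist y L ≤ W}) h _

lemma tubeFn_eq_zero_of_lt_infDist {L : Set (EuclideanSpace ℝ (Fin n))} {W : ℝ}
    {x : EuclideanSpace ℝ (Fin n)} (h : W < Metric.infDist x L) : tubeFn L W x = 0 :=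
  Set.indicator_of_notMem (s := {y | Metric.infDist y L ≤ W}) (not_le.2 h) _

lemma tubeFn_le_one (L : Set (EuclideanSpace ℝ (Fin n))) (W : ℝ) (x : EuclideanSpace ℝ (Fin n)) :
    tubeFn L W x ≤ 1 :=
  Set.indicator_le (fun _ _ => le_rfl) x

lemma half_le_apply_and_abs_apply_le_of_angle_le {v : EuclideanSpace ℝ (Fin n)} {j : Fin n}
    {δ : ℝ} (hv : ‖v‖ = 1) (hδ : δ ≤ 1 / 2) (hang : angle v (EuclideanSpace.single j 1) ≤ δ) :
    1 / 2 ≤ v j ∧ ∀ i ≠ j, |v i| ≤ δ := by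
  have hδ0 : 0 ≤ δ := (angle_nonneg _ _).trans hang
  have hcos : Real.cos δ ≤ v j := by
    have h := Real.cos_le_cos_of_nonneg_of_le_pi (angle_nonneg _ _)
      (by linarith [Real.pi_gt_three]) hang
    simpa [cos_angle, EuclideanSpace.inner_single_right, hv] using h
  have hvj : 1 - δ ^ 2 / 2 ≤ v j := Real.one_sub_sq_div_two_le_cos.trans hcos
  refine ⟨by nlinarith, fun i hij => abs_le_of_sq_le_sq ?_ hδ0⟩
  have hpair : v i ^ 2 + v j ^ 2 ≤ 1 := calc
    v i ^ 2 + v j ^ 2 = ∑ k ∈ {i, j}, v k ^ 2 := (sum_pair (f := fun k => v k ^ 2) hij).symm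
    _ ≤ ∑ k, v k ^ 2 := sum_le_sum_of_subset_of_nonneg (subset_univ _) fun k _ _ => sq_nonneg _
    _ = 1 := by rw [← EuclideanSpace.real_norm_sq_eq, hv, one_pow]
  nlinarith

/-- `z` is where the line crosses `{x_j = c_j}`; over the cube, the other coordinates of the line
move by at most `2δ (S + 2W)`. -/
lemma exists_abs_sub_le_of_infDist_line_le {p v : EuclideanSpace ℝ (Fin n)} {j : Fin n}
    {δ W S : ℝ} (hv : ‖v‖ = 1) (hδ : δ ≤ 1 / 2) (hang : angle v (EuclideanSpace.single j 1) ≤ δ)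
    (hW : 0 < W) (c : EuclideanSpace ℝ (Fin n)) :
    ∃ z : EuclideanSpace ℝ (Fin n), ∀ x ∈ cube c S, Metric.infDist x (line p v) ≤ W →
      ∀ i ≠ j, |x i - z i| ≤ 2 * (2 * W + δ * S) := by
  obtain ⟨hvj, hvi⟩ := half_le_apply_and_abs_apply_le_of_angle_le hv hδ hang
  set t₀ := (c j - p j) / v j
  refine ⟨p + t₀ • v, fun x hx hxW i hij => ?_⟩
  obtain ⟨_, ⟨t, rfl⟩, hxy⟩ : ∃ y ∈ line p v, dist x y < 2 * W :=
    (Metric.infDist_lt_iff (⟨p, 0, by simp⟩ : (line p v).Nonempty)).1 (by linarith)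
  have hcoord : ∀ k, |x k - (p k + t * v k)| ≤ 2 * W := fun k => by
    simpa [Real.dist_eq] using (PiLp.dist_apply_le x _ k).trans hxy.le
  have ht : |t - t₀| ≤ 2 * (S + 2 * W) := by
    have hcross : (t - t₀) * v j = (p j + t * v j) - c j := by
      simp only [t₀]; field_simp; ring
    obtain ⟨hxj₁, hxj₂⟩ := hx j
    obtain ⟨hd₁, hd₂⟩ := abs_le.1 (hcoord j)
    have : |t - t₀| * v j ≤ S + 2 * W := by
      rw [← abs_of_pos (by linarith : 0 < v j), ← abs_mul, hcross]
      exact abs_le.2 ⟨by linarith, by linarith⟩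
    nlinarith [abs_nonneg (t - t₀)]
  calc |x i - (p + t₀ • v) i| = |(x i - (p i + t * v i)) + (t - t₀) * v i| := by
        simp only [PiLp.add_apply, PiLp.smul_apply, smul_eq_mul]; ring_nf
    _ ≤ 2 * W + |t - t₀| * |v i| := by
        rw [← abs_mul]; exact (abs_add_le _ _).trans (by linarith [hcoord i])
    _ ≤ 2 * W + 2 * (S + 2 * W) * δ := by
        have := mul_le_mul ht (hvi i hij) (abs_nonneg _) ((abs_nonneg _).trans ht)
        linarith
    _ ≤ 2 * (2 * W + δ * S) := by nlinarith

end Tubes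

section TubeFamilies

variable {n : ℕ} {ι : Fin n → Type*} (p v : (j : Fin n) → ι j → EuclideanSpace ℝ (Fin n))

def tubeProduct (s : (j : Fin n) → Finset (ι j)) (W q : ℝ) (x : EuclideanSpace ℝ (Fin n)) :
    ℝ≥0∞ :=
  ∏ j, (∑ a ∈ s j, tubeFn (line (p j a) (v j a)) W x) ^ q

open Classical in
def tubesMeeting (s : (j : Fin n) → Finset (ι j)) (Q : Set (EuclideanSpace ℝ (Fin n))) (W : ℝ)
    (j : Fin n) : Finset (ι j) :=
  (s j).filter fun a => ∃ y ∈ Q, Metric.infDist y (line (p j a) (v j a)) ≤ W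

variable {p v}

lemma tubeProduct_le_prod_card {q : ℝ} (hq0 : 0 ≤ q) (s : (j : Fin n) → Finset (ι j)) (W : ℝ)
    (x : EuclideanSpace ℝ (Fin n)) :
    tubeProduct p v s W q x ≤ ∏ j, (#(s j) : ℝ≥0∞) ^ q := by
  refine prod_le_prod' fun j _ => ENNReal.rpow_le_rpow ?_ hq0
  calc ∑ a ∈ s j, tubeFn (line (p j a) (v j a)) W x ≤ ∑ _a ∈ s j, 1 :=
        sum_le_sum fun a _ => tubeFn_le_one _ _ _
    _ = #(s j) := by simp

lemma tubeProduct_eq_tubesMeeting {Q : Set (EuclideanSpace ℝ (Fin n))}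
    {x : EuclideanSpace ℝ (Fin n)} (hx : x ∈ Q) (s : (j : Fin n) → Finset (ι j)) (W q : ℝ) :
    tubeProduct p v s W q x = tubeProduct p v (tubesMeeting p v s Q W) W q x := by
  classical
  refine prod_congr rfl fun j _ => ?_
  rw [tubesMeeting, sum_filter_of_ne]
  intro a _ ha
  by_contra! hfar
  exact ha (tubeFn_eq_zero_of_lt_infDist (hfar x hx))

/-- Every line whose `W`-neighbourhood meets a set of diameter at most `D` has a
`(W + D)`-neighbourhood covering that set. -/
lemma prod_card_tubesMeeting_rpow_le {Q : Set (EuclideanSpace ℝ (Fin n))} {D q : ℝ} (hq0 : 0 ≤ q)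
    (hQ : ∀ x ∈ Q, ∀ y ∈ Q, dist x y ≤ D) {x : EuclideanSpace ℝ (Fin n)} (hx : x ∈ Q)
    (s : (j : Fin n) → Finset (ι j)) (W : ℝ) :
    ∏ j, (#(tubesMeeting p v s Q W j) : ℝ≥0∞) ^ q ≤ tubeProduct p v s (W + D) q x := by
  refine prod_le_prod' fun j _ => ENNReal.rpow_le_rpow ?_ hq0
  classical
  calc (#(tubesMeeting p v s Q W j) : ℝ≥0∞)
      = ∑ a ∈ tubesMeeting p v s Q W j, tubeFn (line (p j a) (v j a)) (W + D) x := by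
        rw [card_eq_sum_ones, Nat.cast_sum, Nat.cast_one]
        refine sum_congr rfl fun a ha => (tubeFn_eq_one_of_infDist_le ?_).symm
        obtain ⟨y, hy, hyW⟩ := (mem_filter.1 ha).2
        have := Metric.infDist_le_infDist_add_dist (s := line (p j a) (v j a)) (x := x) (y := y)
        exact this.trans (by linarith [hQ x hx y hy])
    _ ≤ ∑ a ∈ s j, tubeFn (line (p j a) (v j a)) (W + D) x :=
        sum_le_sum_of_subset (filter_subset _ _)

/-- Each tube, restricted to the cube, lies in a slab `{y | ∀ i ≠ j, |y i - z i| ≤ L}` that does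
not depend on `x_j`, so the Loomis–Whitney inequality applies to the sums of the slab
indicators. -/
theorem setLIntegral_cube_tubeProduct_le {q δ W : ℝ} (hq0 : 0 ≤ q) (hq : ((n : ℝ) - 1) * q = 1)
    (hδ : δ ≤ 1 / 2) (hv : ∀ j a, ‖v j a‖ = 1)
    (hang : ∀ j a, angle (v j a) (EuclideanSpace.single j 1) ≤ δ) (hW : 0 < W)
    (s : (j : Fin n) → Finset (ι j)) (c : EuclideanSpace ℝ (Fin n)) (S : ℝ) :
    ∫⁻ x in cube c S, tubeProduct p v s W q x
      ≤ ENNReal.ofReal (4 * (2 * W + δ * S)) ^ n * ∏ j, (#(s j) : ℝ≥0∞) ^ q := by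
  set L := 2 * (2 * W + δ * S) with hL
  choose z hz using fun j a =>
    exists_abs_sub_le_of_infDist_line_le (p := p j a) (S := S) (hv j a) hδ (hang j a) hW c
  set g : Fin n → (Fin n → ℝ) → ℝ≥0∞ := fun j y =>
    ∑ a ∈ s j, ∏ i ∈ univ.erase j, (Set.Icc (z j a i - L) (z j a i + L)).indicator 1 (y i)
  have hg : ∀ j, Measurable (g j) := fun j => measurable_sum _ fun a _ => measurable_prod _
    fun i _ => (measurable_const.indicator measurableSet_Icc).comp (measurable_pi_apply i)
  have hgj : ∀ j y t, g j (update y j t) = g j y := fun j y t =>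
    sum_congr rfl fun a _ => prod_congr rfl fun i hi => by rw [update_of_ne (ne_of_mem_erase hi)]
  have hdom : ∀ x ∈ cube c S, tubeProduct p v s W q x ≤ ∏ j, g j x.ofLp ^ q := by
    refine fun x hx => prod_le_prod' fun j _ => ENNReal.rpow_le_rpow (sum_le_sum fun a _ => ?_) hq0
    rcases le_or_gt (Metric.infDist x (line (p j a) (v j a))) W with h | h
    · refine (tubeFn_eq_one_of_infDist_le h).trans_le (prod_eq_one fun i hi => ?_).ge
      exact Set.indicator_of_mem (Set.mem_Icc_iff_abs_le.1
        ((abs_sub_comm _ _).trans_le (hz j a x hx h i (ne_of_mem_erase hi)))) _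
    · exact (tubeFn_eq_zero_of_lt_infDist h).trans_le zero_le
  have hX : ∀ j, ((#(s j) : ℝ≥0∞) * ENNReal.ofReal (2 * L) ^ #(univ.erase j)) ^ q
      = (#(s j) : ℝ≥0∞) ^ q * ENNReal.ofReal (4 * (2 * W + δ * S)) := fun j => by
    rw [ENNReal.mul_rpow_of_nonneg _ _ hq0, ← ENNReal.rpow_natCast, ← ENNReal.rpow_mul,
      card_erase_of_mem (mem_univ j), card_univ, Fintype.card_fin,
      Nat.cast_pred (Fin.pos j), hq, ENNReal.rpow_one, hL]
    ring_nf
  calc ∫⁻ x in cube c S, tubeProduct p v s W q x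
      ≤ ∫⁻ x in cube c S, ∏ j, g j x.ofLp ^ q := setLIntegral_mono' (measurableSet_cube c S) hdom
    _ ≤ ∫⁻ x : EuclideanSpace ℝ (Fin n), ∏ j, g j x.ofLp ^ q := setLIntegral_le_lintegral _ _
    _ = ∫⁻ y, ∏ j, g j y ^ q ∂Measure.pi fun _ => volume :=
      (EuclideanSpace.volume_preserving_symm_measurableEquiv_toLp (Fin n)).lintegral_comp_emb
        (MeasurableEquiv.measurableEmbedding _) fun y => ∏ j, g j y ^ q
    _ ≤ ∏ j, (∫⋯∫⁻_(univ.erase j), g j ∂fun _ => volume) 0 ^ q :=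
      lintegral_prod_rpow_le_prod_lmarginal hq0 (by rwa [Fintype.card_fin]) hg hgj 0
    _ = ENNReal.ofReal (4 * (2 * W + δ * S)) ^ n * ∏ j, (#(s j) : ℝ≥0∞) ^ q := by
      simp_rw [g, lmarginal_sum_prod_indicator_Icc, hX, prod_mul_distrib, prod_const, card_univ,
        Fintype.card_fin, mul_comm]

/-- A tube of width `1 + √n a` covers every cell of side `a` that the tube of width `1` around
the same line meets, so the counts are controlled by the single-scale bound for these thicker
tubes over a cube of side `2 a δ⁻¹`. -/
theorem sum_prod_card_tubesMeeting_rpow_le {q δ a : ℝ} (hq0 : 0 ≤ q)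
    (hq : ((n : ℝ) - 1) * q = 1) (hδ0 : 0 < δ) (hδ : δ ≤ 1 / 2) (hv : ∀ j a, ‖v j a‖ = 1)
    (hang : ∀ j a, angle (v j a) (EuclideanSpace.single j 1) ≤ δ) (ha : 1 ≤ a)
    (s : (j : Fin n) → Finset (ι j)) (c : EuclideanSpace ℝ (Fin n)) :
    ∑ k : Fin n → Fin (⌊δ⁻¹⌋₊ + 1),
        ∏ j, (#(tubesMeeting p v s (cube (gridCorner c a k) a) 1 j) : ℝ≥0∞) ^ q
      ≤ ENNReal.ofReal ((16 + 8 * √n) ^ n) * ∏ j, (#(s j) : ℝ≥0∞) ^ q := by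
  have ha0 : 0 < a := by linarith
  have hδ2 : 2 ≤ δ⁻¹ := by rw [le_inv_comm₀ two_pos hδ0]; linarith
  have hK : ((⌊δ⁻¹⌋₊ + 1 : ℕ) : ℝ) * a ≤ 2 * a * δ⁻¹ := by
    have := Nat.floor_le (inv_nonneg.2 hδ0.le)
    push_cast
    nlinarith
  have hcell : ∀ k : Fin n → Fin (⌊δ⁻¹⌋₊ + 1),
      (∏ j, (#(tubesMeeting p v s (cube (gridCorner c a k) a) 1 j) : ℝ≥0∞) ^ q)
          * ENNReal.ofReal a ^ n
        ≤ ∫⁻ x in cubeIco (gridCorner c a k) a, tubeProduct p v s (1 + √n * a) q x := fun k => by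
    rw [← volume_cubeIco, ← setLIntegral_const]
    exact setLIntegral_mono' (measurableSet_cubeIco _ _) fun x hx =>
      prod_card_tubesMeeting_rpow_le hq0 (fun y hy z hz => dist_le_of_mem_cube ha0.le hy hz)
        (cubeIco_subset_cube _ _ hx) s 1
  have hwidth : ENNReal.ofReal (4 * (2 * (1 + √n * a) + δ * (2 * a * δ⁻¹)))
      ≤ ENNReal.ofReal (16 + 8 * √n) * ENNReal.ofReal a := by
    rw [← ENNReal.ofReal_mul (by positivity), mul_comm δ, mul_assoc, inv_mul_cancel₀ hδ0.ne',
      mul_one]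
    exact ENNReal.ofReal_le_ofReal (by nlinarith [Real.sqrt_nonneg n])
  have hpow : ENNReal.ofReal a ^ n ≠ 0 := pow_ne_zero _ (ENNReal.ofReal_pos.2 ha0).ne'
  refine (ENNReal.mul_le_mul_iff_left hpow (by finiteness)).1 ?_
  calc (∑ k : Fin n → Fin (⌊δ⁻¹⌋₊ + 1),
        ∏ j, (#(tubesMeeting p v s (cube (gridCorner c a k) a) 1 j) : ℝ≥0∞) ^ q)
          * ENNReal.ofReal a ^ n
      ≤ ∑ k : Fin n → Fin (⌊δ⁻¹⌋₊ + 1),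
          ∫⁻ x in cubeIco (gridCorner c a k) a, tubeProduct p v s (1 + √n * a) q x := by
        rw [sum_mul]; exact sum_le_sum fun k _ => hcell k
    _ ≤ ∫⁻ x in cube c (2 * a * δ⁻¹), tubeProduct p v s (1 + √n * a) q x := by
        rw [← setLIntegral_iUnion_cubeIco_gridCorner ha0]
        exact lintegral_mono_set (iUnion_cubeIco_gridCorner_subset_cube ha0.le hK)
    _ ≤ ENNReal.ofReal (4 * (2 * (1 + √n * a) + δ * (2 * a * δ⁻¹))) ^ n
          * ∏ j, (#(s j) : ℝ≥0∞) ^ q :=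
        setLIntegral_cube_tubeProduct_le hq0 hq hδ hv hang (by positivity) s c _
    _ ≤ (ENNReal.ofReal (16 + 8 * √n) * ENNReal.ofReal a) ^ n * ∏ j, (#(s j) : ℝ≥0∞) ^ q := by
        gcongr
    _ = ENNReal.ofReal ((16 + 8 * √n) ^ n) * (∏ j, (#(s j) : ℝ≥0∞) ^ q)
          * ENNReal.ofReal a ^ n := by
        rw [mul_pow, ENNReal.ofReal_pow (by positivity), mul_right_comm]

/-- On a cell of side `a` only the tubes meeting that cell contribute, so `hB` bounds its
integral by the number of those tubes. -/
theorem setLIntegral_cube_mul_inv_tubeProduct_le {q δ a : ℝ} {B : ℝ≥0∞} (hq0 : 0 ≤ q)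
    (hq : ((n : ℝ) - 1) * q = 1) (hδ0 : 0 < δ) (hδ : δ ≤ 1 / 2) (hv : ∀ j a, ‖v j a‖ = 1)
    (hang : ∀ j a, angle (v j a) (EuclideanSpace.single j 1) ≤ δ) (ha : 1 ≤ a)
    (hB : ∀ (s : (j : Fin n) → Finset (ι j)) (c : EuclideanSpace ℝ (Fin n)),
      ∫⁻ x in cube c a, tubeProduct p v s 1 q x ≤ B * ∏ j, (#(s j) : ℝ≥0∞) ^ q)
    (s : (j : Fin n) → Finset (ι j)) (c : EuclideanSpace ℝ (Fin n)) :
    ∫⁻ x in cube c (a * δ⁻¹), tubeProduct p v s 1 q x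
      ≤ B * ENNReal.ofReal ((16 + 8 * √n) ^ n) * ∏ j, (#(s j) : ℝ≥0∞) ^ q := by
  have ha0 : 0 < a := by linarith
  have hcover : cube c (a * δ⁻¹) ⊆ ⋃ k : Fin n → Fin (⌊δ⁻¹⌋₊ + 1), cubeIco (gridCorner c a k) a :=
    cube_subset_iUnion_cubeIco_gridCorner ha0 (by
      rw [mul_comm]; push_cast; exact mul_lt_mul_of_pos_right (Nat.lt_floor_add_one _) ha0)
  calc ∫⁻ x in cube c (a * δ⁻¹), tubeProduct p v s 1 q x
      ≤ ∑ k : Fin n → Fin (⌊δ⁻¹⌋₊ + 1),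
          ∫⁻ x in cubeIco (gridCorner c a k) a, tubeProduct p v s 1 q x := by
        rw [← setLIntegral_iUnion_cubeIco_gridCorner ha0]
        exact lintegral_mono_set hcover
    _ ≤ ∑ k : Fin n → Fin (⌊δ⁻¹⌋₊ + 1), ∫⁻ x in cube (gridCorner c a k) a,
          tubeProduct p v (tubesMeeting p v s (cube (gridCorner c a k) a) 1) 1 q x := by
        refine sum_le_sum fun k _ => (lintegral_mono_set (cubeIco_subset_cube _ _)).trans_eq ?_
        exact setLIntegral_congr_fun (measurableSet_cube _ _) fun x hx =>
          tubeProduct_eq_tubesMeeting hx s 1 q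
    _ ≤ ∑ k : Fin n → Fin (⌊δ⁻¹⌋₊ + 1),
          B * ∏ j, (#(tubesMeeting p v s (cube (gridCorner c a k) a) 1 j) : ℝ≥0∞) ^ q :=
        sum_le_sum fun k _ => hB _ _
    _ ≤ B * ENNReal.ofReal ((16 + 8 * √n) ^ n) * ∏ j, (#(s j) : ℝ≥0∞) ^ q := by
        rw [← mul_sum, mul_assoc]
        gcongr
        exact sum_prod_card_tubesMeeting_rpow_le hq0 hq hδ0 hδ hv hang ha s c

theorem setLIntegral_cube_inv_pow_tubeProduct_le {q δ : ℝ} (hq0 : 0 ≤ q)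
    (hq : ((n : ℝ) - 1) * q = 1) (hδ0 : 0 < δ) (hδ : δ ≤ 1 / 2) (hv : ∀ j a, ‖v j a‖ = 1)
    (hang : ∀ j a, angle (v j a) (EuclideanSpace.single j 1) ≤ δ) (M : ℕ)
    (s : (j : Fin n) → Finset (ι j)) (c : EuclideanSpace ℝ (Fin n)) :
    ∫⁻ x in cube c (δ⁻¹ ^ M), tubeProduct p v s 1 q x
      ≤ ENNReal.ofReal ((16 + 8 * √n) ^ n) ^ M * ∏ j, (#(s j) : ℝ≥0∞) ^ q := by
  induction M generalizing s c with
  | zero =>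
    calc ∫⁻ x in cube c (δ⁻¹ ^ 0), tubeProduct p v s 1 q x
        ≤ ∫⁻ _ in cube c 1, ∏ j, (#(s j) : ℝ≥0∞) ^ q := by
          rw [pow_zero]; exact lintegral_mono fun x => tubeProduct_le_prod_card hq0 s 1 x
      _ = ENNReal.ofReal ((16 + 8 * √n) ^ n) ^ 0 * ∏ j, (#(s j) : ℝ≥0∞) ^ q := by
          simp [volume_cube]
  | succ M ih =>
    rw [pow_succ, pow_succ]
    exact setLIntegral_cube_mul_inv_tubeProduct_le hq0 hq hδ0 hδ hv hang
      (one_le_pow₀ (by rw [one_le_inv₀ hδ0]; linarith)) ih s c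

end TubeFamilies

/-- Iterated scale-step bound at powers of `δ⁻¹`: there is `C_n` such that for `0 < δ ≤ 1/2`
and lines making angle at most `δ` with the corresponding axes, for every `M : ℕ` and every
cube of side `δ^{-M}`, `∫_Q ∏_j (∑_a T_{j,a})^{1/(n-1)} ≤ C_n^M ∏_j N_j^{1/(n-1)}`. -/
theorem iterated_scale_step (n : ℕ) (hn : 2 ≤ n) :
    ∃ C : ℝ, 0 < C ∧
      ∀ (δ : ℝ), 0 < δ → δ ≤ 1 / 2 →
      ∀ (N : Fin n → ℕ) (p v : (j : Fin n) → Fin (N j) → EuclideanSpace ℝ (Fin n)),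
        (∀ j a, ‖v j a‖ = 1) →
        (∀ j a, InnerProductGeometry.angle (v j a) (EuclideanSpace.single j 1) ≤ δ) →
        ∀ (M : ℕ) (c : EuclideanSpace ℝ (Fin n)),
          ∫⁻ x in cube c (δ⁻¹ ^ M),
              ∏ j : Fin n, (∑ a : Fin (N j),
                tubeFn (line (p j a) (v j a)) 1 x) ^ ((1 : ℝ) / ((n : ℝ) - 1))
            ≤ ENNReal.ofReal (C ^ M) *
                ∏ j : Fin n, (N j : ℝ≥0∞) ^ ((1 : ℝ) / ((n : ℝ) - 1)) := by
  have hn1 : (0 : ℝ) < n - 1 := by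
    have : (2 : ℝ) ≤ n := by exact_mod_cast hn
    linarith
  refine ⟨(16 + 8 * √n) ^ n, by positivity, fun δ hδ0 hδ N p v hv hang M c => ?_⟩
  have h := setLIntegral_cube_inv_pow_tubeProduct_le (p := p) (by positivity)
    (mul_one_div_cancel hn1.ne') hδ0 hδ hv hang M (fun _ => univ) c
  rw [← ENNReal.ofReal_pow (by positivity)] at h
  simpa [tubeProduct] using h
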